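/- arXiv:1401.4712 — 6 statements merged into one kernel-verified Lean document; each statement's English description precedes it below -/
import Mathlib

section
/- Let Σ be a finite alphabet and f : Σ → ℤ a function with f(a) ≥ −1 for all a ∈ Σ. Let w = w₁⋯w_n be an f-valid word of length n, write b(i) = Σ_{j=1}^{i} f(w_j) for 1 ≤ i ≤ n, and fix ℓ ∈ {1,…,n}. Then the cyclic rotation w' = w_{ℓ+1}⋯w_n w₁⋯w_ℓ is an f-Lukasiewicz word if and only if b(i) ≥ b(ℓ) for all i ∈ {ℓ+1,…,n} and b(i) > b(ℓ) for all i ∈ {1,…,ℓ−1}. -/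
/-- A word `w` over an alphabet `α` is `f`-valid if the sum of `f` over its letters is `-1`. -/
def IsFValid {α : Type*} (f : α → ℤ) (w : List α) : Prop :=
  (w.map f).sum = -1

/-- A word `w` is an `f`-Lukasiewicz word if it is `f`-valid and every proper prefix sum
(of length `i` with `1 ≤ i < n`) is nonnegative. -/
def IsLukasiewicz {α : Type*} (f : α → ℤ) (w : List α) : Prop :=
  IsFValid f w ∧ ∀ i : ℕ, 1 ≤ i → i < w.length → 0 ≤ ((w.take i).map f).sum

/-!
Rotating `w` at `ℓ` shifts its prefix sums: the prefix of the rotation ending at letter `w_i`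
has sum `b i - b ℓ` for `i > ℓ`, and, after wrapping around, `b(n) - b ℓ + b i = b i - b ℓ - 1`
for `i < ℓ`. Nonnegativity of these sums is therefore `b i ≥ b ℓ` in the first range and,
by integrality, `b i > b ℓ` in the second.
-/

theorem Nat.forall_pos_lt_iff_forall_le_sub_and_forall_sub_add {n ℓ : ℕ} (p : ℕ → Prop)
    (hℓ1 : 1 ≤ ℓ) (hℓn : ℓ ≤ n) :
    (∀ i, 1 ≤ i → i < n → p i) ↔
      (∀ i, 1 ≤ i → i ≤ n - ℓ → p i) ∧ ∀ j, 1 ≤ j → j ≤ ℓ - 1 → p (n - ℓ + j) := by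
  refine ⟨fun h => ⟨fun i hi1 hi => h i hi1 (by omega),
    fun j hj1 hj => h _ (by omega) (by omega)⟩, fun ⟨hhead, htail⟩ i hi1 hin => ?_⟩
  by_cases hi : i ≤ n - ℓ
  · exact hhead i hi1 hi
  · simpa [show n - ℓ + (i - (n - ℓ)) = i by omega] using
      htail (i - (n - ℓ)) (by omega) (by omega)

namespace List

section AddCommGroup

variable {M : Type*} [AddCommGroup M] (l : List M) {ℓ : ℕ}

theorem sum_take_rotate_of_le_length_sub (hℓ : ℓ ≤ l.length) {i : ℕ} (hi : i ≤ l.length - ℓ) :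
    ((l.rotate ℓ).take i).sum = (l.take (ℓ + i)).sum - (l.take ℓ).sum := by
  rw [rotate_eq_drop_append_take hℓ, take_append_of_le_length (by simpa using hi), take_add,
    sum_append]
  abel

theorem sum_take_rotate_length_sub_add (hℓ : ℓ ≤ l.length) {j : ℕ} (hj : j ≤ ℓ) :
    ((l.rotate ℓ).take (l.length - ℓ + j)).sum = l.sum - (l.take ℓ).sum + (l.take j).sum := by
  rw [rotate_eq_drop_append_take hℓ, ← length_drop, take_length_add_append, take_take,
    min_eq_left hj, sum_append, ← sum_take_add_sum_drop l ℓ]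
  abel

end AddCommGroup

section Int

variable (l : List ℤ) {ℓ : ℕ}

theorem forall_sum_take_rotate_nonneg_iff_le_sum_take (hℓ : ℓ ≤ l.length) :
    (∀ i, 1 ≤ i → i ≤ l.length - ℓ → 0 ≤ ((l.rotate ℓ).take i).sum) ↔
      ∀ i, ℓ + 1 ≤ i → i ≤ l.length → (l.take ℓ).sum ≤ (l.take i).sum := by
  constructor
  · intro h i hi1 hin
    have := h (i - ℓ) (by omega) (by omega)
    rw [sum_take_rotate_of_le_length_sub l hℓ (by omega), Nat.add_sub_cancel' (by omega)] at this
    linarith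
  · intro h i hi1 hi
    rw [sum_take_rotate_of_le_length_sub l hℓ hi]
    linarith [h (ℓ + i) (by omega) (by omega)]

theorem forall_sum_take_rotate_length_sub_add_nonneg_iff_lt_sum_take (hl : l.sum = -1)
    (hℓ : ℓ ≤ l.length) :
    (∀ j, 1 ≤ j → j ≤ ℓ - 1 → 0 ≤ ((l.rotate ℓ).take (l.length - ℓ + j)).sum) ↔
      ∀ j, 1 ≤ j → j ≤ ℓ - 1 → (l.take ℓ).sum < (l.take j).sum := by
  refine forall₃_congr fun j _ hj => ?_
  rw [sum_take_rotate_length_sub_add l hℓ (by omega), hl]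
  omega

end Int

end List

theorem rotation_is_lukasiewicz_iff_general
    {α : Type*} (f : α → ℤ)
    (w : List α) (n : ℕ) (hn : n = w.length)
    (hw : IsFValid f w)
    (b : ℕ → ℤ) (hb : ∀ i : ℕ, b i = ((w.take i).map f).sum)
    (ℓ : ℕ) (hℓ1 : 1 ≤ ℓ) (hℓn : ℓ ≤ n) :
    IsLukasiewicz f (w.drop ℓ ++ w.take ℓ) ↔
      (∀ i : ℕ, ℓ + 1 ≤ i → i ≤ n → b ℓ ≤ b i) ∧
      (∀ i : ℕ, 1 ≤ i → i ≤ ℓ - 1 → b ℓ < b i) := by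
  obtain rfl : b = fun i => ((w.map f).take i).sum := funext fun i => by rw [hb, List.map_take]
  subst hn
  have hl : (w.map f).sum = -1 := hw
  have hℓl : ℓ ≤ (w.map f).length := by simpa using hℓn
  have hvalid : IsFValid f (w.rotate ℓ) := by
    rw [IsFValid, List.map_rotate, (List.rotate_perm _ ℓ).sum_eq, hl]
  rw [← List.rotate_eq_drop_append_take hℓn, IsLukasiewicz, and_iff_right hvalid,
    List.length_rotate]
  simp only [List.map_take, List.map_rotate]
  rw [← List.length_map (f := f), Nat.forall_pos_lt_iff_forall_le_sub_and_forall_sub_add _ hℓ1 hℓl,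
    List.forall_sum_take_rotate_nonneg_iff_le_sum_take _ hℓl,
    List.forall_sum_take_rotate_length_sub_add_nonneg_iff_lt_sum_take _ hl hℓl]

/-- Let `w` be an `f`-valid word of length `n` (with `f ≥ -1` on a finite
alphabet), `b i = f w₁ + ⋯ + f wᵢ`, and fix `ℓ ∈ {1,…,n}`.  The cyclic rotation
`w_{ℓ+1}⋯w_n w_1⋯w_ℓ` is an `f`-Lukasiewicz word iff `b i ≥ b ℓ` for all
`i ∈ {ℓ+1,…,n}` and `b i > b ℓ` for all `i ∈ {1,…,ℓ-1}`. -/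
theorem rotation_is_lukasiewicz_iff
    {α : Type*} [Fintype α] (f : α → ℤ) (hf : ∀ x : α, -1 ≤ f x)
    (w : List α) (n : ℕ) (hn : n = w.length)
    (hw : IsFValid f w)
    (b : ℕ → ℤ) (hb : ∀ i : ℕ, b i = ((w.take i).map f).sum)
    (ℓ : ℕ) (hℓ1 : 1 ≤ ℓ) (hℓn : ℓ ≤ n) :
    IsLukasiewicz f (w.drop ℓ ++ w.take ℓ) ↔
      (∀ i : ℕ, ℓ + 1 ≤ i → i ≤ n → b ℓ ≤ b i) ∧
      (∀ i : ℕ, 1 ≤ i → i ≤ ℓ - 1 → b ℓ < b i) :=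
  rotation_is_lukasiewicz_iff_general f w n hn hw b hb ℓ hℓ1 hℓn
end

section
/- Let Σ be a finite alphabet and f : Σ → ℤ a function with f(a) ≥ −1 for all a ∈ Σ. Let w = w₁⋯w_n be an f-valid word, write b(i) = Σ_{j=1}^{i} f(w_j), and let ℓ be the smallest index in {1,…,n} at which b attains its minimum, i.e. b(ℓ) ≤ b(i) for all i ∈ {1,…,n} and b(i) > b(ℓ) for all i < ℓ. Then the cyclic rotation w_{ℓ+1}⋯w_n w₁⋯w_ℓ is an f-Lukasiewicz word. -/
/-- Let `w` be an `f`-valid word (with `f ≥ -1` on a finite alphabet),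
`b i = f w₁ + ⋯ + f wᵢ`, and let `ℓ ∈ {1,…,n}` be the smallest index at which `b`
attains its minimum (i.e. `b ℓ ≤ b i` for all `i ∈ {1,…,n}` and `b i > b ℓ` for `i < ℓ`).
Then the cyclic rotation `w_{ℓ+1}⋯w_n w_1⋯w_ℓ` is an `f`-Lukasiewicz word. -/
theorem rotation_at_first_min_is_lukasiewicz
    {α : Type*} [Fintype α] (f : α → ℤ) (hf : ∀ x : α, -1 ≤ f x)
    (w : List α) (n : ℕ) (hn : n = w.length)
    (hw : IsFValid f w)
    (b : ℕ → ℤ) (hb : ∀ i : ℕ, b i = ((w.take i).map f).sum)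
    (ℓ : ℕ) (hℓ1 : 1 ≤ ℓ) (hℓn : ℓ ≤ n)
    (hmin : ∀ i : ℕ, 1 ≤ i → i ≤ n → b ℓ ≤ b i)
    (hfirst : ∀ i : ℕ, 1 ≤ i → i < ℓ → b ℓ < b i) :
    IsLukasiewicz f (w.drop ℓ ++ w.take ℓ) := by
  subst hn
  have hdlen : (w.drop ℓ).length = w.length - ℓ := by simp
  have hwsum : ((w.drop ℓ).map f).sum = -1 - b ℓ := by
    have := hw
    unfold IsFValid at this
    have h2 : ((w.take ℓ).map f).sum + ((w.drop ℓ).map f).sum = -1 := by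
      rw [← List.sum_append, ← List.map_append, List.take_append_drop]; exact this
    rw [hb]; linarith
  have key : ∀ k, (((w.drop ℓ).take k).map f).sum = b (ℓ + k) - b ℓ := by
    intro k
    rw [hb, hb, List.take_add, List.map_append, List.sum_append]; ring
  constructor
  · unfold IsFValid
    rw [List.map_append, List.sum_append, add_comm, ← List.sum_append, ← List.map_append,
      List.take_append_drop]
    exact hw
  · intro i hi1 hilen
    rw [List.length_append, List.length_take, List.length_drop] at hilen
    rw [List.take_append, List.map_append, List.sum_append, hdlen]
    by_cases hcase : i ≤ w.length - ℓ
    · have h0 : i - (w.length - ℓ) = 0 := by omega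
      rw [h0]
      simp only [List.take_zero, List.map_nil, List.sum_nil, add_zero]
      rw [key]
      have := hmin (ℓ + i) (by omega) (by omega)
      linarith
    · have hA : (w.drop ℓ).take i = w.drop ℓ := List.take_of_length_le (by omega)
      rw [hA, hwsum]
      set j := i - (w.length - ℓ) with hj
      have hjl : j ≤ ℓ := by omega
      have h2 : (w.take ℓ).take j = w.take j := by
        rw [List.take_take, min_eq_left hjl]
      rw [h2, ← hb]
      have := hfirst j (by omega) (by omega)
      linarith
end

section
/- Let Σ be a finite alphabet and f : Σ → ℤ a function with f(a) ≥ −1 for all a ∈ Σ. If w is an f-valid word of length n, then the n cyclic rotations of w (the words w_{ℓ+1}⋯w_n w₁⋯w_ℓ for ℓ = 0,1,…,n−1) are pairwise distinct. -/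
namespace List

variable {α M : Type*} [AddCommMonoid M] (f : α → M)

theorem length_nsmul_sum_map_eq_of_append_comm {u v : List α} (h : u ++ v = v ++ u) :
    v.length • (u.map f).sum = u.length • (v.map f).sum := by
  rcases eq_or_ne u [] with rfl | hu
  · simp
  rcases eq_or_ne v [] with rfl | hv
  · simp
  rcases append_eq_append_iff.mp h with ⟨v', hv₁, hv₂⟩ | ⟨u', hu₁, hu₂⟩
  · have hcomm : u ++ v' = v' ++ u := hv₁.symm.trans hv₂
    have ih := length_nsmul_sum_map_eq_of_append_comm hcomm
    subst hv₁
    simp only [length_append, map_append, sum_append, add_nsmul, nsmul_add, ih]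
  · have hcomm : u' ++ v = v ++ u' := hu₂.symm.trans hu₁
    have ih := length_nsmul_sum_map_eq_of_append_comm hcomm
    subst hu₁
    simp only [length_append, map_append, sum_append, add_nsmul, nsmul_add, ih]
termination_by u.length + v.length
decreasing_by
  · subst hv₁; simp [length_pos_iff.mpr hu]
  · subst hu₁; simp [length_pos_iff.mpr hv]

theorem length_nsmul_sum_map_take_of_rotate_eq_self {w : List α} {k : ℕ} (hk : k ≤ w.length)
    (h : w.rotate k = w) : w.length • ((w.take k).map f).sum = k • (w.map f).sum := by
  have hcomm : w.take k ++ w.drop k = w.drop k ++ w.take k := by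
    rw [take_append_drop, ← rotate_eq_drop_append_take hk, h]
  have hlen : w.length = k + (w.drop k).length := by simp [hk]
  rw [hlen, add_nsmul, length_nsmul_sum_map_eq_of_append_comm f hcomm, length_take_of_le hk,
    ← nsmul_add, ← sum_append, ← map_append, take_append_drop]

end List

theorem IsFValid.rotate_ne_self {α : Type*} {f : α → ℤ} {w : List α} (hw : IsFValid f w)
    {k : ℕ} (hk₀ : 0 < k) (hk : k < w.length) : w.rotate k ≠ w := by
  intro h
  have hsum := List.length_nsmul_sum_map_take_of_rotate_eq_self f hk.le h
  rw [hw, nsmul_eq_mul, smul_neg, nsmul_one] at hsum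
  have hdvd : w.length ∣ k := by
    rw [← Int.natCast_dvd_natCast]
    exact ⟨-((w.take k).map f).sum, by linarith⟩
  exact hk₀.ne' (Nat.eq_zero_of_dvd_of_lt hdvd hk)

theorem rotations_of_valid_word_pairwise_distinct_general
    {α : Type*} (f : α → ℤ)
    (w : List α) (n : ℕ) (hn : n = w.length)
    (hw : IsFValid f w) :
    ∀ ℓ₁ ℓ₂ : ℕ, ℓ₁ < n → ℓ₂ < n →
      w.drop ℓ₁ ++ w.take ℓ₁ = w.drop ℓ₂ ++ w.take ℓ₂ → ℓ₁ = ℓ₂ := by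
  intro ℓ₁ ℓ₂ h₁ h₂ h
  subst hn
  rw [← List.rotate_eq_drop_append_take h₁.le, ← List.rotate_eq_drop_append_take h₂.le] at h
  wlog hle : ℓ₁ ≤ ℓ₂ generalizing ℓ₁ ℓ₂
  · exact (this ℓ₂ ℓ₁ h.symm h₂ h₁ (le_of_not_ge hle)).symm
  by_contra hne
  refine hw.rotate_ne_self (k := ℓ₂ - ℓ₁) (by omega) (by omega) ?_
  rw [← List.rotate_eq_rotate (n := ℓ₁), List.rotate_rotate, Nat.sub_add_cancel hle, h]

/-- If `w` is an `f`-valid word of length `n` (with `f ≥ -1` on a finite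
alphabet), then the `n` cyclic rotations `w_{ℓ+1}⋯w_n w_1⋯w_ℓ`, for `ℓ = 0,1,…,n-1`,
are pairwise distinct. -/
theorem rotations_of_valid_word_pairwise_distinct
    {α : Type*} [Fintype α] (f : α → ℤ) (hf : ∀ x : α, -1 ≤ f x)
    (w : List α) (n : ℕ) (hn : n = w.length)
    (hw : IsFValid f w) :
    ∀ ℓ₁ ℓ₂ : ℕ, ℓ₁ < n → ℓ₂ < n →
      w.drop ℓ₁ ++ w.take ℓ₁ = w.drop ℓ₂ ++ w.take ℓ₂ → ℓ₁ = ℓ₂ :=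
  rotations_of_valid_word_pairwise_distinct_general f w n hn hw
end

section
/- Let Σ be a finite alphabet and f : Σ → ℤ a function with f(a) ≥ −1 for all a ∈ Σ. If w is an f-Lukasiewicz word whose first letter is a, then there exist f-Lukasiewicz words w₁,…,w_{f(a)+1} such that w = a·w₁·w₂·⋯·w_{f(a)+1} (concatenation), and this factorization is unique: if a·v₁·⋯·v_{f(a)+1} = a·w₁·⋯·w_{f(a)+1} with all vᵢ and wᵢ f-Lukasiewicz words, then vᵢ = wᵢ for all i. -/
lemma luk_ne_nil {α : Type*} {f : α → ℤ} {u : List α} (hu : IsLukasiewicz f u) : u ≠ [] := by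
  intro h; subst h; simpa [IsFValid] using hu.1

lemma luk_prefix_eq {α : Type*} {f : α → ℤ} {u v : List α} (hu : IsLukasiewicz f u)
    (hv : IsLukasiewicz f v) (h : u <+: v) : u = v := by
  rcases h with ⟨r, rfl⟩
  rcases eq_or_ne r [] with rfl | hr
  · simp
  · exfalso
    have h1 : 1 ≤ u.length := by
      have := luk_ne_nil hu
      cases u with
      | nil => simp at this
      | cons x xs => simp
    have h2 : u.length < (u ++ r).length := by
      simp only [List.length_append]
      have := List.length_pos_iff.2 hr
      omega
    have h3 := hv.2 u.length h1 h2
    rw [List.take_left] at h3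
    have h4 := hu.1
    unfold IsFValid at h4
    omega

lemma luk_append_cancel {α : Type*} {f : α → ℤ} {u v r s : List α}
    (hu : IsLukasiewicz f u) (hv : IsLukasiewicz f v) (h : u ++ r = v ++ s) :
    u = v ∧ r = s := by
  rcases List.append_eq_append_iff.1 h with ⟨a', rfl, rfl⟩ | ⟨c', rfl, rfl⟩
  · have : u = u ++ a' := luk_prefix_eq hu hv ⟨a', rfl⟩
    have ha : a' = [] := by
      have := congrArg List.length this; simp at this; exact this
    subst ha; simp
  · have : v = v ++ c' := luk_prefix_eq hv hu ⟨c', rfl⟩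
    have hc : c' = [] := by
      have := congrArg List.length this; simp at this; exact this
    subst hc; simp

lemma luk_flatten_unique {α : Type*} {f : α → ℤ} :
    ∀ (ws vs : List (List α)), ws.length = vs.length →
      (∀ u ∈ ws, IsLukasiewicz f u) → (∀ u ∈ vs, IsLukasiewicz f u) →
      ws.flatten = vs.flatten → ws = vs := by
  intro ws
  induction ws with
  | nil => intro vs hlen _ _ _; cases vs with
    | nil => rfl
    | cons v vs => simp at hlen
  | cons u ws ih =>
    intro vs hlen hws hvs hflat
    cases vs with
    | nil => simp at hlen
    | cons v vs =>
      simp only [List.flatten_cons] at hflat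
      obtain ⟨huv, htail⟩ := luk_append_cancel (hws u (by simp)) (hvs v (by simp)) hflat
      subst huv
      have := ih vs (by simpa using hlen) (fun x hx => hws x (by simp [hx]))
        (fun x hx => hvs x (by simp [hx])) htail
      rw [this]

lemma luk_exists_fact {α : Type*} (f : α → ℤ) (hf : ∀ x : α, -1 ≤ f x) :
    ∀ (N : ℕ) (t : List α), t.length ≤ N → ∀ k : ℕ,
      (t.map f).sum = -(k : ℤ) →
      (∀ i, i < t.length → 1 - (k : ℤ) ≤ ((t.take i).map f).sum) →
      ∃ ws : List (List α), ws.length = k ∧ (∀ v ∈ ws, IsLukasiewicz f v) ∧ t = ws.flatten := by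
  intro N
  induction N with
  | zero =>
    intro t ht k hsum _
    have ht0 : t = [] := List.length_eq_zero_iff.1 (Nat.le_zero.1 ht)
    subst ht0
    simp at hsum
    have : k = 0 := by omega
    subst this
    exact ⟨[], by simp⟩
  | succ N ih =>
    intro t ht k hsum hpre
    match k with
    | 0 =>
      cases t with
      | nil => exact ⟨[], by simp⟩
      | cons x xs =>
        have := hpre 0 (by simp)
        simp at this
    | (k+1) =>
      have hP : ∃ i, ((t.take i).map f).sum ≤ -1 := by
        refine ⟨t.length, ?_⟩
        rw [List.take_length, hsum]
        push_cast; omega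
      classical
      set n := Nat.find hP with hn_def
      have hn_spec : ((t.take n).map f).sum ≤ -1 := Nat.find_spec hP
      have hn_min : ∀ m, m < n → 0 ≤ ((t.take m).map f).sum := by
        intro m hm
        have := Nat.find_min hP hm
        omega
      have hn_pos : 1 ≤ n := by
        by_contra h
        have hn0 : n = 0 := by omega
        rw [hn0] at hn_spec
        simp only [List.take_zero, List.map_nil, List.sum_nil] at hn_spec
        omega
      have hn_le : n ≤ t.length := Nat.find_le (by rw [List.take_length, hsum]; push_cast; omega)
      -- step relation : sum take n = sum take (n-1) + f (t[n-1])
      obtain ⟨m, hm⟩ : ∃ m, n = m + 1 := ⟨n - 1, by omega⟩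
      rw [hm] at hn_spec hn_le hn_min
      have hm_lt : m < t.length := by omega
      have hstep : ((t.take (m+1)).map f).sum
          = ((t.take m).map f).sum + f (t.get ⟨m, hm_lt⟩) := by
        rw [List.map_take, List.map_take, List.sum_take_succ (t.map f) m (by simpa using hm_lt)]
        congr 1
        simp
      have hgm : 0 ≤ ((t.take m).map f).sum := hn_min m (by omega)
      have hsum_u : ((t.take (m+1)).map f).sum = -1 := by
        have := hf (t.get ⟨m, hm_lt⟩)
        omega
      set u := t.take (m+1) with hu_def
      set t' := t.drop (m+1) with ht'_def
      have hulen : u.length = m + 1 := by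
        rw [hu_def, List.length_take]; omega
      have hu : IsLukasiewicz f u := by
        constructor
        · exact hsum_u
        · intro i hi1 hi2
          rw [hulen] at hi2
          have : u.take i = t.take i := by
            rw [hu_def, List.take_take]; congr 1; omega
          rw [this]
          exact hn_min i (by omega)
      have hsplit : ∀ i, t.take (m + 1 + i) = u ++ t'.take i := by
        intro i
        rw [hu_def, ht'_def, ← List.take_add]
      have hflat : t = u ++ t' := (List.take_append_drop (m+1) t).symm
      have hsum_t' : (t'.map f).sum = -(k : ℤ) := by
        have : (t.map f).sum = (u.map f).sum + (t'.map f).sum := by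
          rw [hflat]; simp
        rw [hsum, hsum_u] at this
        push_cast at this ⊢
        omega
      have ht'len : t'.length = t.length - (m+1) := by
        rw [ht'_def, List.length_drop]
      have hpre' : ∀ i, i < t'.length → 1 - (k : ℤ) ≤ ((t'.take i).map f).sum := by
        intro i hi
        have hlt : m + 1 + i < t.length := by omega
        have h1 := hpre (m + 1 + i) hlt
        rw [hsplit i] at h1
        simp only [List.map_append, List.sum_append] at h1
        rw [hsum_u] at h1
        push_cast at h1 ⊢
        omega
      obtain ⟨ws, hws_len, hws_luk, hws_eq⟩ := ih t' (by omega) k hsum_t' hpre'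
      refine ⟨u :: ws, by simp [hws_len], ?_, ?_⟩
      · intro v hv
        rw [List.mem_cons] at hv
        rcases hv with rfl | hv
        · exact hu
        · exact hws_luk v hv
      · rw [List.flatten_cons, ← hws_eq, hflat]

/-- If `w` is an `f`-Lukasiewicz word (with `f ≥ -1` on a finite alphabet)
whose first letter is `a`, then there exists a unique list of `f(a)+1` `f`-Lukasiewicz
words `w₁,…,w_{f(a)+1}` such that `w = a · w₁ · w₂ ⋯ w_{f(a)+1}` (concatenation). -/
theorem lukasiewicz_unique_factorization
    {α : Type*} [Fintype α] (f : α → ℤ) (hf : ∀ x : α, -1 ≤ f x)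
    (a : α) (w : List α)
    (hw : IsLukasiewicz f w) (hhead : w.head? = some a) :
    ∃! ws : List (List α),
      ws.length = (f a + 1).toNat ∧
      (∀ v ∈ ws, IsLukasiewicz f v) ∧
      w = a :: ws.flatten := by
  obtain ⟨t, rfl⟩ : ∃ t, w = a :: t := by
    cases w with
    | nil => simp at hhead
    | cons x xs => simp at hhead; exact ⟨xs, by rw [hhead]⟩
  set k := (f a + 1).toNat with hk_def
  have hk : (k : ℤ) = f a + 1 := Int.toNat_of_nonneg (by have := hf a; omega)
  have hsum_t : (t.map f).sum = -(k : ℤ) := by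
    have := hw.1
    unfold IsFValid at this
    simp only [List.map_cons, List.sum_cons] at this
    omega
  have hpre_t : ∀ i, i < t.length → 1 - (k : ℤ) ≤ ((t.take i).map f).sum := by
    intro i hi
    have h1 := hw.2 (i + 1) (by omega) (by simp; omega)
    simp only [List.take_succ_cons, List.map_cons, List.sum_cons] at h1
    omega
  obtain ⟨ws, hws_len, hws_luk, hws_eq⟩ :=
    luk_exists_fact f hf t.length t le_rfl k hsum_t hpre_t
  refine ⟨ws, ⟨hws_len, hws_luk, by rw [hws_eq]⟩, ?_⟩
  rintro vs ⟨hvs_len, hvs_luk, hvs_eq⟩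
  apply luk_flatten_unique vs ws (by rw [hvs_len, hws_len]) hvs_luk hws_luk
  have : a :: vs.flatten = a :: ws.flatten := by rw [← hvs_eq, ← hws_eq]
  exact List.cons_injective this
end

section
/- Define a sequence C̃ : ℕ≥1 → ℝ by C̃(1) = 2 and C̃(k) = 1 + (C̃(⌊k/2⌋) + C̃(⌈k/2⌉))/2 for k ≥ 2. Then for every n ≥ 2, C̃(n) = ⌊log₂(n−1)⌋ + 1 + n/2^{⌊log₂(n−1)⌋}. -/
/-!
The closed form `f` is piecewise affine: on each dyadic block `[2 ^ e, 2 ^ (e + 1)]` it equals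
`e + 1 + n / 2 ^ e` (adjacent formulas agree at the common end, and `f 1 = 2`). For `k ≥ 2` the
halves `⌊k/2⌋, ⌈k/2⌉` lie in one block, `k` lies in the next, and the halves sum to `k`, so `f`
satisfies the recurrence. A solution of the recurrence is determined by its value at `1`.
-/

theorem eq_of_halving_recurrence {α : Type*} (F : ℕ → α → α → α) {C D : ℕ → α}
    (h1 : C 1 = D 1)
    (hC : ∀ k, 2 ≤ k → C k = F k (C (k / 2)) (C ((k + 1) / 2)))
    (hD : ∀ k, 2 ≤ k → D k = F k (D (k / 2)) (D ((k + 1) / 2))) :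
    ∀ n, 1 ≤ n → C n = D n := by
  intro n
  induction n using Nat.strong_induction_on with
  | _ n ih =>
    intro hn
    obtain rfl | hn2 := eq_or_lt_of_le hn
    · exact h1
    rw [hC n hn2, hD n hn2, ih (n / 2) (by omega) (by omega),
      ih ((n + 1) / 2) (by omega) (by omega)]

noncomputable def dichotomicClosedForm (n : ℕ) : ℝ :=
  Nat.log 2 (n - 1) + 1 + n / 2 ^ Nat.log 2 (n - 1)

theorem dichotomicClosedForm_one : dichotomicClosedForm 1 = 2 := by
  norm_num [dichotomicClosedForm]

theorem dichotomicClosedForm_eq_of_pow_le_of_le_pow {n e : ℕ} (hlo : 2 ^ e ≤ n)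
    (hhi : n ≤ 2 ^ (e + 1)) : dichotomicClosedForm n = e + 1 + n / 2 ^ e := by
  unfold dichotomicClosedForm
  obtain hlt | rfl := lt_or_eq_of_le hlo
  · rw [Nat.log_eq_of_pow_le_of_lt_pow (b := 2) (m := e) (by omega) (by omega)]
  obtain _ | e := e
  · norm_num
  have hlog : Nat.log 2 (2 ^ (e + 1) - 1) = e :=
    Nat.log_eq_of_pow_le_of_lt_pow (by rw [pow_succ]; have := Nat.one_le_two_pow (n := e); omega)
      (by have := Nat.one_le_two_pow (n := e + 1); omega)
  rw [hlog]
  push_cast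
  field_simp
  ring

theorem dichotomicClosedForm_recurrence (k : ℕ) (hk : 2 ≤ k) :
    dichotomicClosedForm k =
      1 + (dichotomicClosedForm (k / 2) + dichotomicClosedForm ((k + 1) / 2)) / 2 := by
  obtain ⟨e, he⟩ : ∃ e, Nat.log 2 k = e + 1 :=
    ⟨Nat.log 2 k - 1,
      by have := Nat.le_log_of_pow_le (b := 2) (x := 1) (by norm_num) (by omega); omega⟩
  have hlo : 2 ^ e * 2 ≤ k := by
    rw [← pow_succ, ← he]; exact Nat.pow_log_le_self 2 (by omega)
  have hhi : k < 2 ^ e * 2 * 2 := by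
    rw [← pow_succ, ← pow_succ, ← he]; exact Nat.lt_pow_succ_log_self (by norm_num) k
  have hsum : ((k / 2 : ℕ) : ℝ) + ((k + 1) / 2 : ℕ) = k := by
    exact_mod_cast (show k / 2 + (k + 1) / 2 = k by omega)
  rw [dichotomicClosedForm_eq_of_pow_le_of_le_pow (n := k) (e := e + 1) (by rwa [pow_succ])
      (by rw [pow_succ, pow_succ]; omega),
    dichotomicClosedForm_eq_of_pow_le_of_le_pow (n := k / 2) (e := e) (by omega)
      (by rw [pow_succ]; omega),
    dichotomicClosedForm_eq_of_pow_le_of_le_pow (n := (k + 1) / 2) (e := e) (by omega)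
      (by rw [pow_succ]; omega)]
  field_simp
  push_cast
  linear_combination (-2 ^ e * 2 : ℝ) * hsum

/-- Let `C̃ : ℕ → ℝ` satisfy `C̃ 1 = 2` and
`C̃ k = 1 + (C̃ ⌊k/2⌋ + C̃ ⌈k/2⌉)/2` for `k ≥ 2`.  Then for every `n ≥ 2`,
`C̃ n = ⌊log₂ (n-1)⌋ + 1 + n / 2 ^ ⌊log₂ (n-1)⌋`
(where `⌊log₂ m⌋` is the largest `e` with `2 ^ e ≤ m`, i.e. `Nat.log 2 m`). -/
theorem dichotomic_mean_cost_closed_form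
    (C : ℕ → ℝ) (hC1 : C 1 = 2)
    (hCk : ∀ k : ℕ, 2 ≤ k → C k = 1 + (C (k / 2) + C ((k + 1) / 2)) / 2) :
    ∀ n : ℕ, 2 ≤ n →
      C n = (Nat.log 2 (n - 1) : ℝ) + 1 + (n : ℝ) / 2 ^ (Nat.log 2 (n - 1)) := by
  intro n hn
  exact eq_of_halving_recurrence (fun _ a b => 1 + (a + b) / 2)
    (hC1.trans dichotomicClosedForm_one.symm) hCk dichotomicClosedForm_recurrence n (by omega)
end

section
/- Define sequences C, C̃ : ℕ≥1 → ℝ by C(1) = C̃(1) = 2, C̃(k) = 1 + (C̃(⌊k/2⌋) + C̃(⌈k/2⌉))/2 for k ≥ 2, and C(k) = 1 + (1/2)·max_{1 ≤ m ≤ k−1} (C(m) + C(k−m)) for k ≥ 2. Then C(k) = C̃(k) for every k ≥ 1; in particular the maximum in the recursion for C is attained at the balanced split m = ⌊k/2⌋. -/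
noncomputable def gfun (k : ℕ) : ℝ :=
  (Nat.log 2 k : ℝ) + 1 + (k : ℝ) / 2 ^ Nat.log 2 k

lemma gG {a m : ℕ} (h1 : 2 ^ a ≤ m) (h2 : m ≤ 2 ^ (a + 1)) :
    gfun m = (a : ℝ) + 1 + (m : ℝ) / 2 ^ a := by
  rcases lt_or_eq_of_le h2 with h2 | h2
  · rw [gfun, Nat.log_eq_of_pow_le_of_lt_pow h1 h2]
  · subst h2
    rw [gfun, Nat.log_pow (by norm_num)]
    push_cast
    rw [pow_succ]
    field_simp
    ring

lemma gstep (m : ℕ) (hm : 1 ≤ m) :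
    gfun (m + 1) = gfun m + 1 / 2 ^ Nat.log 2 m := by
  have h1 : 2 ^ Nat.log 2 m ≤ m := Nat.pow_log_le_self 2 (by omega)
  have h2 : m < 2 ^ (Nat.log 2 m + 1) := Nat.lt_pow_succ_log_self (by norm_num) m
  rw [gG (a := Nat.log 2 m) (by omega) (by omega), gG h1 h2.le]
  push_cast
  field_simp
  ring

lemma gmax : ∀ d m n : ℕ, n - m = d → 1 ≤ m → m ≤ n →
    gfun m + gfun n ≤ gfun ((m + n) / 2) + gfun ((m + n + 1) / 2) := by
  intro d
  induction d using Nat.strong_induction_on with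
  | _ d ih =>
    intro m n hd hm hmn
    by_cases h : m = (m + n) / 2
    · have hn : n = (m + n + 1) / 2 := by omega
      rw [← h, ← hn]
    · have h1 : m + 2 ≤ n := by omega
      have step1 := gstep m hm
      have step2 := gstep (n - 1) (by omega)
      have hn1 : n - 1 + 1 = n := by omega
      rw [hn1] at step2
      have hlog : Nat.log 2 m ≤ Nat.log 2 (n - 1) := Nat.log_mono_right (by omega)
      have hpow : (1 : ℝ) / 2 ^ Nat.log 2 (n - 1) ≤ 1 / 2 ^ Nat.log 2 m := by
        apply one_div_le_one_div_of_le
        · positivity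
        · exact pow_le_pow_right₀ (by norm_num) hlog
      have key : gfun m + gfun n ≤ gfun (m + 1) + gfun (n - 1) := by linarith
      have ihres := ih (n - 1 - (m + 1)) (by omega) (m + 1) (n - 1) rfl (by omega) (by omega)
      have heq : m + 1 + (n - 1) = m + n := by omega
      rw [heq] at ihres
      linarith

lemma grec (k : ℕ) (hk : 2 ≤ k) :
    gfun k = 1 + (gfun (k / 2) + gfun ((k + 1) / 2)) / 2 := by
  have ha : 1 ≤ Nat.log 2 k := Nat.le_log_of_pow_le (by norm_num) (by omega)
  obtain ⟨b, hb⟩ : ∃ b, Nat.log 2 k = b + 1 := ⟨Nat.log 2 k - 1, by omega⟩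
  have h1 : 2 ^ (b + 1) ≤ k := by rw [← hb]; exact Nat.pow_log_le_self 2 (by omega)
  have h2 : k < 2 ^ (b + 1 + 1) := by rw [← hb]; exact Nat.lt_pow_succ_log_self (by norm_num) k
  rw [pow_succ] at h2
  have hk1 : gfun k = ((b : ℝ) + 1) + 1 + (k : ℝ) / 2 ^ (b + 1) := by
    have := gG h1 (le_of_lt (by rw [pow_succ]; exact h2))
    rw [this]; push_cast; ring
  have hh1 : gfun (k / 2) = (b : ℝ) + 1 + ((k / 2 : ℕ) : ℝ) / 2 ^ b :=
    gG (by omega) (by omega)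
  have hh2 : gfun ((k + 1) / 2) = (b : ℝ) + 1 + (((k + 1) / 2 : ℕ) : ℝ) / 2 ^ b :=
    gG (by omega) (by omega)
  have hsum : (k / 2 : ℕ) + ((k + 1) / 2 : ℕ) = k := by omega
  have hsumR : ((k / 2 : ℕ) : ℝ) + (((k + 1) / 2 : ℕ) : ℝ) = (k : ℝ) := by
    rw [← Nat.cast_add, hsum]
  rw [hk1, hh1, hh2]
  rw [pow_succ]
  field_simp
  linarith [hsumR]

/-- Let `C, C̃ : ℕ → ℝ` satisfy `C 1 = C̃ 1 = 2`,
`C̃ k = 1 + (C̃ ⌊k/2⌋ + C̃ ⌈k/2⌉)/2` for `k ≥ 2`, and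
`C k = 1 + (1/2) · max_{1 ≤ m ≤ k-1} (C m + C (k-m))` for `k ≥ 2`.
Then `C k = C̃ k` for every `k ≥ 1`; in particular the maximum in the recursion for `C`
is attained at the balanced split `m = ⌊k/2⌋`. -/
theorem dichotomic_mean_cost_balanced_split
    (C Ct : ℕ → ℝ) (hC1 : C 1 = 2) (hCt1 : Ct 1 = 2)
    (hCtk : ∀ k : ℕ, 2 ≤ k → Ct k = 1 + (Ct (k / 2) + Ct ((k + 1) / 2)) / 2)
    (hCk : ∀ k : ℕ, (hk : 2 ≤ k) →
      C k = 1 + (1 / 2) *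
        ((Finset.Icc 1 (k - 1)).sup' (Finset.nonempty_Icc.mpr (by omega))
          (fun m => C m + C (k - m)))) :
    (∀ k : ℕ, 1 ≤ k → C k = Ct k) ∧
    (∀ k : ℕ, (hk : 2 ≤ k) →
      (Finset.Icc 1 (k - 1)).sup' (Finset.nonempty_Icc.mpr (by omega))
          (fun m => C m + C (k - m)) = C (k / 2) + C (k - k / 2)) := by
  have hg1 : gfun 1 = 2 := by
    rw [gfun]
    norm_num [Nat.log]
  -- Ct = gfun
  have hCt : ∀ k : ℕ, 1 ≤ k → Ct k = gfun k := by
    intro k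
    induction k using Nat.strong_induction_on with
    | _ k ih =>
      intro hk
      rcases eq_or_lt_of_le hk with h | h
      · rw [← h, hCt1, hg1]
      · have hk2 : 2 ≤ k := h
        rw [hCtk k hk2, ih (k / 2) (by omega) (by omega),
          ih ((k + 1) / 2) (by omega) (by omega), grec k hk2]
  -- the sup lemma, given C = gfun below k
  have supeq : ∀ k : ℕ, (hk2 : 2 ≤ k) → (∀ j, j < k → 1 ≤ j → C j = gfun j) →
      ((Finset.Icc 1 (k - 1)).sup' (Finset.nonempty_Icc.mpr (by omega))
        (fun m => C m + C (k - m))) = gfun (k / 2) + gfun (k - k / 2) := by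
    intro k hk2 ih
    apply le_antisymm
    · apply Finset.sup'_le
      intro m hm
      simp only [Finset.mem_Icc] at hm
      rw [ih m (by omega) (by omega), ih (k - m) (by omega) (by omega)]
      have hkk : k - k / 2 = (k + 1) / 2 := by omega
      rw [hkk]
      rcases le_or_gt m (k - m) with hle | hle
      · have := gmax (k - m - m) m (k - m) rfl (by omega) hle
        have he : m + (k - m) = k := by omega
        rw [he] at this
        linarith
      · have := gmax (m - (k - m)) (k - m) m rfl (by omega) hle.le
        have he : k - m + m = k := by omega
        rw [he] at this
        linarith
    · have hmem : k / 2 ∈ Finset.Icc 1 (k - 1) := by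
        simp only [Finset.mem_Icc]; omega
      have := Finset.le_sup' (fun m => C m + C (k - m)) hmem
      calc gfun (k / 2) + gfun (k - k / 2)
          = C (k / 2) + C (k - k / 2) := by
            rw [ih (k / 2) (by omega) (by omega), ih (k - k / 2) (by omega) (by omega)]
        _ ≤ _ := this
  -- C = gfun
  have hC : ∀ k : ℕ, 1 ≤ k → C k = gfun k := by
    intro k
    induction k using Nat.strong_induction_on with
    | _ k ih =>
      intro hk
      rcases eq_or_lt_of_le hk with h | h
      · rw [← h, hC1, hg1]
      · have hk2 : 2 ≤ k := h
        rw [hCk k hk2, supeq k hk2 (fun j hj hj1 => ih j hj hj1)]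
        have hkk : k - k / 2 = (k + 1) / 2 := by omega
        rw [hkk, grec k hk2]
        ring
  constructor
  · intro k hk
    rw [hC k hk, hCt k hk]
  · intro k hk2
    rw [supeq k hk2 (fun j hj hj1 => hC j hj1),
      hC (k / 2) (by omega), hC (k - k / 2) (by omega)]
end
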